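/- (Theorem 4.2, direction 2 ⇒ 1, abstracted): If π is an ultimately periodic path in a mean-payoff game and there exist values z_i (each a punishment value) such that every pair (s_k, a^k) along π is z_i-secure for every player i, and z_i ≤ pay_i(π) for every i, then there exists a Nash equilibrium σ whose outcome from s₀ is π (obtained by following π and switching to a z_i-secure punishment strategy against the first deviator). -/
import Mathlib


open Filter

/-- Mean payoff: the liminf of running averages. -/
noncomputable def MP (r : ℕ → ℝ) : ℝ :=
  Filter.liminf (fun n => (∑ j ∈ Finset.range n, r j) / n) Filter.atTop

/-- A strategy: a choice of action given the history of past action profiles. -/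
abbrev Strat (N Ac : Type) := List (N → Ac) → Ac

/-- The list of the first `n` action profiles generated by the profile `σ`. -/
def histActs {N Ac : Type} (σ : N → Strat N Ac) : ℕ → List (N → Ac)
  | 0 => []
  | n + 1 => histActs σ n ++ [fun i => σ i (histActs σ n)]

/-- The action profile played at step `n`. -/
def actsAt {N Ac : Type} (σ : N → Strat N Ac) (n : ℕ) : N → Ac :=
  fun i => σ i (histActs σ n)

/-- The state reached at step `n` from `s0` under profile `σ`. -/
def stateAt {N St Ac : Type} (tr : St → (N → Ac) → St) (σ : N → Strat N Ac)
    (s0 : St) : ℕ → St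
  | 0 => s0
  | n + 1 => tr (stateAt tr σ s0 n) (actsAt σ n)

/-- Player `i`'s mean payoff under profile `σ` from `s0`, for weights `w`. -/
noncomputable def pay {N St Ac : Type} (w : N → St → ℤ) (tr : St → (N → Ac) → St)
    (σ : N → Strat N Ac) (s0 : St) (i : N) : ℝ :=
  MP (fun n => (w i (stateAt tr σ s0 n) : ℝ))

/-- Nash equilibrium: no unilateral deviation strictly increases a payoff. -/
def NE {N St Ac : Type} [DecidableEq N] (w : N → St → ℤ) (tr : St → (N → Ac) → St)
    (σ : N → Strat N Ac) (s0 : St) : Prop :=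
  ∀ i (σ' : Strat N Ac), pay w tr (Function.update σ i σ') s0 i ≤ pay w tr σ s0 i

/-! ### Auxiliary machinery -/

section Aux

variable {N Ac : Type}

/- The grim-trigger strategy profile: follow `a` while the history is
consistent with `a`; upon the first deviation, switch to `punish`. -/
open Classical in
noncomputable def grim (a : ℕ → N → Ac)
    (punish : ℕ → (N → Ac) → N → Strat N Ac) : N → Strat N Ac :=
  fun j h =>
    if hc : ∃ k, ∃ b, h[k]? = some b ∧ b ≠ a k then
      punish (Nat.find hc) ((h[Nat.find hc]?).getD (a (Nat.find hc))) j
        (h.drop (Nat.find hc + 1))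
    else a h.length j

theorem grim_consistent {a : ℕ → N → Ac} {punish : ℕ → (N → Ac) → N → Strat N Ac}
    {h : List (N → Ac)} (hcon : ∀ k b, h[k]? = some b → b = a k) (j : N) :
    grim a punish j h = a h.length j := by
  rw [grim, dif_neg]
  rintro ⟨k, b, hb, hne⟩
  exact hne (hcon k b hb)

theorem grim_punish {a : ℕ → N → Ac} {punish : ℕ → (N → Ac) → N → Strat N Ac}
    {h : List (N → Ac)} {m : ℕ} {b : N → Ac}
    (hlt : ∀ k < m, h[k]? = some (a k)) (hm : h[m]? = some b) (hb : b ≠ a m) (j : N) :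
    grim a punish j h = punish m b j (h.drop (m + 1)) := by
  have hc : ∃ k, ∃ b, h[k]? = some b ∧ b ≠ a k := ⟨m, b, hm, hb⟩
  rw [grim, dif_pos hc]
  have hfind : @Nat.find (fun k => ∃ b, h[k]? = some b ∧ b ≠ a k)
      (fun k => Classical.propDecidable _) hc = m :=
    (@Nat.find_eq_iff m (fun k => ∃ b, h[k]? = some b ∧ b ≠ a k)
      (fun k => Classical.propDecidable _) hc).mpr ⟨⟨b, hm, hb⟩, fun k hk => by
      rintro ⟨b', hb', hne⟩
      rw [hlt k hk] at hb'
      exact hne (Option.some_injective _ hb').symm⟩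
  rw [hfind, hm]
  rfl

theorem histActs_succ (σ : N → Strat N Ac) (n : ℕ) :
    histActs σ (n + 1) = histActs σ n ++ [actsAt σ n] := rfl

theorem histActs_eq_map (σ : N → Strat N Ac) (n : ℕ) :
    histActs σ n = (List.range n).map (actsAt σ) := by
  induction n with
  | zero => rfl
  | succ n ih => rw [histActs_succ, ih, List.range_succ, List.map_append]; rfl

theorem histActs_length (σ : N → Strat N Ac) (n : ℕ) :
    (histActs σ n).length = n := by
  rw [histActs_eq_map]; simp

theorem histActs_getElem? (σ : N → Strat N Ac) {n k : ℕ} (hk : k < n) :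
    (histActs σ n)[k]? = some (actsAt σ k) := by
  rw [histActs_eq_map]
  simp [List.getElem?_map, List.getElem?_range hk]

theorem avg_abs_le {r : ℕ → ℝ} {B : ℝ} (hB : ∀ n, |r n| ≤ B) (n : ℕ) :
    |(∑ j ∈ Finset.range n, r j) / n| ≤ B := by
  have hB0 : 0 ≤ B := le_trans (abs_nonneg _) (hB 0)
  rcases Nat.eq_zero_or_pos n with rfl | hn
  · simpa using hB0
  · have hn' : (0 : ℝ) < n := by exact_mod_cast hn
    rw [abs_div, abs_of_nonneg hn'.le, div_le_iff₀ hn']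
    calc |∑ j ∈ Finset.range n, r j| ≤ ∑ j ∈ Finset.range n, |r j| :=
          Finset.abs_sum_le_sum_abs _ _
      _ ≤ ∑ _j ∈ Finset.range n, B := Finset.sum_le_sum fun j _ => hB j
      _ = B * n := by rw [Finset.sum_const, Finset.card_range, nsmul_eq_mul, mul_comm]

theorem liminf_le_of_sub_tendsto_zero {u v : ℕ → ℝ} {B : ℝ}
    (hu : ∀ n, |u n| ≤ B) (hv : ∀ n, |v n| ≤ B)
    (h : Filter.Tendsto (fun n => u n - v n) atTop (nhds 0)) :
    Filter.liminf u atTop ≤ Filter.liminf v atTop := by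
  refine le_of_forall_pos_le_add fun ε hε => ?_
  have hev : ∀ᶠ n in atTop, u n ≤ v n + ε := by
    have h2 := Metric.tendsto_nhds.mp h ε hε
    filter_upwards [h2] with n hn
    rw [Real.dist_eq, sub_zero] at hn
    have := (abs_lt.mp hn).2
    linarith
  have hbu : IsBoundedUnder (· ≥ ·) atTop u :=
    isBoundedUnder_of ⟨-B, fun n => neg_le_of_abs_le (hu n)⟩
  have hbvle : IsBoundedUnder (· ≤ ·) atTop (fun n => v n + ε) :=
    isBoundedUnder_of ⟨B + ε, fun n => by
      have := (abs_le.mp (hv n)).2; show v n + ε ≤ B + ε; linarith⟩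
  have hcv : IsCoboundedUnder (· ≥ ·) atTop (fun n => v n + ε) :=
    hbvle.isCoboundedUnder_ge
  have hcv' : IsCoboundedUnder (· ≥ ·) atTop v :=
    IsBoundedUnder.isCoboundedUnder_ge
      (isBoundedUnder_of ⟨B, fun n => (abs_le.mp (hv n)).2⟩)
  have hbv : IsBoundedUnder (· ≥ ·) atTop v :=
    isBoundedUnder_of ⟨-B, fun n => neg_le_of_abs_le (hv n)⟩
  calc liminf u atTop ≤ liminf (fun n => v n + ε) atTop := liminf_le_liminf hev hbu hcv
    _ = liminf v atTop + ε := liminf_add_const atTop v ε hcv' hbv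

theorem liminf_eq_of_sub_tendsto_zero {u v : ℕ → ℝ} {B : ℝ}
    (hu : ∀ n, |u n| ≤ B) (hv : ∀ n, |v n| ≤ B)
    (h : Filter.Tendsto (fun n => u n - v n) atTop (nhds 0)) :
    Filter.liminf u atTop = Filter.liminf v atTop := by
  refine le_antisymm (liminf_le_of_sub_tendsto_zero hu hv h)
    (liminf_le_of_sub_tendsto_zero hv hu ?_)
  have := h.neg
  simpa [neg_sub] using this

/-- Mean payoff is invariant under shifting a bounded sequence. -/
theorem MP_shift {r : ℕ → ℝ} {B : ℝ} (hB : ∀ n, |r n| ≤ B) (m : ℕ) :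
    MP (fun n => r (n + m)) = MP r := by
  have hB0 : 0 ≤ B := le_trans (abs_nonneg _) (hB 0)
  have hB' : ∀ n, |r (n + m)| ≤ B := fun n => hB _
  refine liminf_eq_of_sub_tendsto_zero (avg_abs_le hB') (avg_abs_le hB) ?_
  have key : ∀ n : ℕ,
      (∑ j ∈ Finset.range n, r (j + m)) - ∑ j ∈ Finset.range n, r j
        = (∑ j ∈ Finset.range m, r (n + j)) - ∑ j ∈ Finset.range m, r j := by
    intro n
    have h1 := Finset.sum_range_add r n m
    have h2 := Finset.sum_range_add r m n
    have h3 : ∀ j, r (m + j) = r (j + m) := fun j => by rw [Nat.add_comm]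
    simp only [h3] at h2
    rw [Nat.add_comm m n] at h2
    linarith
  have hbound : ∀ n : ℕ,
      ‖(∑ j ∈ Finset.range n, r (j + m)) / n - (∑ j ∈ Finset.range n, r j) / n‖
        ≤ (2 * B * m) / n := by
    intro n
    rcases Nat.eq_zero_or_pos n with rfl | hn
    · simp
    · have hn' : (0 : ℝ) < n := by exact_mod_cast hn
      rw [div_sub_div_same, Real.norm_eq_abs, abs_div, abs_of_nonneg hn'.le,
        div_le_div_iff_of_pos_right hn']
      rw [key n]
      have e1 : |∑ j ∈ Finset.range m, r (n + j)| ≤ B * m := by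
        calc |∑ j ∈ Finset.range m, r (n + j)| ≤ ∑ j ∈ Finset.range m, |r (n + j)| :=
              Finset.abs_sum_le_sum_abs _ _
          _ ≤ ∑ _j ∈ Finset.range m, B := Finset.sum_le_sum fun j _ => hB _
          _ = B * m := by rw [Finset.sum_const, Finset.card_range, nsmul_eq_mul, mul_comm]
      have e2 : |∑ j ∈ Finset.range m, r j| ≤ B * m := by
        calc |∑ j ∈ Finset.range m, r j| ≤ ∑ j ∈ Finset.range m, |r j| :=
              Finset.abs_sum_le_sum_abs _ _
          _ ≤ ∑ _j ∈ Finset.range m, B := Finset.sum_le_sum fun j _ => hB _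
          _ = B * m := by rw [Finset.sum_const, Finset.card_range, nsmul_eq_mul, mul_comm]
      calc |(∑ j ∈ Finset.range m, r (n + j)) - ∑ j ∈ Finset.range m, r j|
          ≤ |∑ j ∈ Finset.range m, r (n + j)| + |∑ j ∈ Finset.range m, r j| := abs_sub _ _
        _ ≤ B * m + B * m := add_le_add e1 e2
        _ = 2 * B * m := by ring
  exact squeeze_zero_norm hbound (tendsto_const_div_atTop_nhds_zero_nat (2 * B * m))

end Aux

/-- Theorem 4.2, direction (2) ⇒ (1), abstracted. If `π` is an ultimately
periodic path in a mean-payoff game (generated from `s₀` by the action profiles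
`a`), and there exist values `z_i` — each a punishment value — such that every
pair `(π k, a k)` along the path is `z_i`-secure for every player `i` (every
unilateral deviation leads to a state with punishment value at most `z_i`,
where the coalition `N ∖ {i}` can hold `i` down to `pun i s` from any `s`),
and `z_i ≤ pay_i(π)` for every `i`, then there is a Nash equilibrium `σ` whose
outcome from `s₀` is exactly `π`. -/
theorem secure_path_implies_NE {N St Ac : Type} [DecidableEq N] [Fintype St]
    (w : N → St → ℤ) (tr : St → (N → Ac) → St) (s0 : St)
    (π : ℕ → St) (a : ℕ → N → Ac)
    (hπ0 : π 0 = s0)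
    (hstep : ∀ k, tr (π k) (a k) = π (k + 1))
    (hper : ∃ k p, 1 ≤ p ∧ ∀ n ≥ k, π (n + p) = π n ∧ a (n + p) = a n)
    (pun : N → St → ℝ)
    (hpun : ∀ i s, ∃ τ : N → Strat N Ac, ∀ τi' : Strat N Ac,
      pay w tr (Function.update τ i τi') s i ≤ pun i s)
    (z : N → ℝ)
    (hzpun : ∀ i, ∃ s, z i = pun i s)
    (hsec : ∀ (i : N) (k : ℕ) (a' : Ac),
      pun i (tr (π k) (Function.update (a k) i a')) ≤ z i)
    (hz : ∀ i, z i ≤ MP (fun n => (w i (π n) : ℝ))) :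
    ∃ σ : N → Strat N Ac, NE w tr σ s0 ∧ ∀ n, stateAt tr σ s0 n = π n := by
  classical
  -- the punishment strategies
  set τ : N → St → (N → Strat N Ac) := fun i s => (hpun i s).choose with hτdef
  have hτspec : ∀ i s (τi' : Strat N Ac),
      pay w tr (Function.update (τ i s) i τi') s i ≤ pun i s :=
    fun i s => (hpun i s).choose_spec
  -- the punish component of the grim strategy
  set punish : ℕ → (N → Ac) → N → Strat N Ac := fun k b j h =>
    if hb : ∃ i', b i' ≠ a k i' then τ hb.choose (tr (π k) b) j h else b j with hpunishdef
  set σ : N → Strat N Ac := grim a punish with hσdef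
  -- the outcome of σ is π
  have hacts : ∀ n, actsAt σ n = a n := by
    have hhist : ∀ n, histActs σ n = (List.range n).map a := by
      intro n
      induction n with
      | zero => rfl
      | succ n ih =>
        rw [histActs_succ, ih, List.range_succ, List.map_append]
        congr 1
        simp only [List.map_cons, List.map_nil]
        congr 1
        funext j
        show σ j (histActs σ n) = a n j
        rw [ih, hσdef]
        show grim a punish j ((List.range n).map a) = a n j
        have hcon : ∀ k b, (((List.range n).map a))[k]? = some b → b = a k := by
          intro k b hb
          rcases lt_or_ge k n with hk | hk
          · rw [List.getElem?_map, List.getElem?_range hk] at hb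
            exact (Option.some_injective _ hb).symm
          · rw [List.getElem?_eq_none (by simpa using hk)] at hb
            exact absurd hb (by simp)
        rw [grim_consistent hcon]
        simp
    intro n
    funext j
    show σ j (histActs σ n) = a n j
    rw [hhist n, hσdef]
    show grim a punish j ((List.range n).map a) = a n j
    have hcon : ∀ k b, (((List.range n).map a))[k]? = some b → b = a k := by
      intro k b hb
      rcases lt_or_ge k n with hk | hk
      · rw [List.getElem?_map, List.getElem?_range hk] at hb
        exact (Option.some_injective _ hb).symm
      · rw [List.getElem?_eq_none (by simpa using hk)] at hb
        exact absurd hb (by simp)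
    rw [grim_consistent hcon]
    simp
  have hstate : ∀ n, stateAt tr σ s0 n = π n := by
    intro n
    induction n with
    | zero => exact hπ0.symm
    | succ n ih => show tr (stateAt tr σ s0 n) (actsAt σ n) = _; rw [ih, hacts, hstep]
  refine ⟨σ, ?_, hstate⟩
  -- the payoff of the main path
  have hpayσ : ∀ i, pay w tr σ s0 i = MP (fun n => (w i (π n) : ℝ)) := by
    intro i
    unfold pay
    congr 1
    funext n
    rw [hstate]
  intro i σ'
  set ρ : N → Strat N Ac := Function.update σ i σ' with hρdef
  by_cases hdev : ∀ n, actsAt ρ n = a n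
  · -- no deviation: same outcome
    have hstρ : ∀ n, stateAt tr ρ s0 n = π n := by
      intro n
      induction n with
      | zero => exact hπ0.symm
      | succ n ih => show tr (stateAt tr ρ s0 n) (actsAt ρ n) = _; rw [ih, hdev, hstep]
    have : pay w tr ρ s0 i = MP (fun n => (w i (π n) : ℝ)) := by
      unfold pay; congr 1; funext n; rw [hstρ]
    rw [this, hpayσ]
  · -- deviation: find the first deviation step
    push_neg at hdev
    have hm := Nat.find_spec hdev
    set m := Nat.find hdev with hmdef
    have hmin : ∀ k < m, actsAt ρ k = a k := fun k hk => by
      by_contra hc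
      exact absurd (Nat.find_le hc) (not_le.mpr hk)
    set b : N → Ac := actsAt ρ m with hbdef
    -- histories up to m
    have hhk : ∀ k < m, (histActs ρ m)[k]? = some (a k) := by
      intro k hk
      rw [histActs_getElem? ρ hk, hmin k hk]
    -- the actions of coalition members at step m match a m
    have hbj : ∀ j, j ≠ i → b j = a m j := by
      intro j hj
      have : ρ j = σ j := Function.update_of_ne hj _ _
      show ρ j (histActs ρ m) = a m j
      rw [this]
      have hcon : ∀ k c, (histActs ρ m)[k]? = some c → c = a k := by
        intro k c hc
        rcases lt_or_ge k m with hk | hk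
        · rw [hhk k hk] at hc
          exact (Option.some_injective _ hc).symm
        · rw [List.getElem?_eq_none (by rw [histActs_length]; exact hk)] at hc
          exact absurd hc (by simp)
      show grim a punish j (histActs ρ m) = a m j
      rw [grim_consistent hcon, histActs_length]
    have hbi : b i ≠ a m i := by
      intro hc
      apply hm
      funext j
      by_cases hj : j = i
      · rw [hj]; exact hc
      · exact hbj j hj
    have hbne : b ≠ a m := fun hc => hbi (congrFun hc i)
    have hbu : b = Function.update (a m) i (b i) := by
      funext j
      by_cases hj : j = i
      · subst hj; rw [Function.update_self]
      · rw [Function.update_of_ne hj, hbj j hj]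
    -- states up to m follow π
    have hstρ : ∀ n, n ≤ m → stateAt tr ρ s0 n = π n := by
      intro n hn
      induction n with
      | zero => exact hπ0.symm
      | succ n ih =>
        show tr (stateAt tr ρ s0 n) (actsAt ρ n) = _
        rw [ih (le_of_lt hn), hmin n hn, hstep]
    set s' : St := tr (π m) b with hs'def
    have hpuns' : pun i s' ≤ z i := by
      rw [hs'def, hbu]
      exact hsec i m (b i)
    -- the punishment tail
    set τ' : N → Strat N Ac := τ i s' with hτ'def
    set P : List (N → Ac) := histActs ρ (m + 1) with hPdef
    have hPlen : P.length = m + 1 := histActs_length ρ (m + 1)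
    have hPk : ∀ k < m, P[k]? = some (a k) := by
      intro k hk
      rw [hPdef, histActs_getElem? ρ (Nat.lt_succ_of_lt hk), hmin k hk]
    have hPm : P[m]? = some b := histActs_getElem? ρ (Nat.lt_succ_self m)
    set τi' : Strat N Ac := fun h' => σ' (P ++ h') with hτi'def
    set ρ2 : N → Strat N Ac := Function.update τ' i τi' with hρ2def
    -- the grim strategy in punishment mode
    have hgrimP : ∀ (l : List (N → Ac)) (j : N), j ≠ i →
        σ j (P ++ l) = τ' j l := by
      intro l j hj
      have h1 : ∀ k < m, (P ++ l)[k]? = some (a k) := by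
        intro k hk
        rw [List.getElem?_append_left (by omega : k < P.length)]
        exact hPk k hk
      have h2 : (P ++ l)[m]? = some b := by
        rw [List.getElem?_append_left (by omega : m < P.length)]
        exact hPm
      show grim a punish j (P ++ l) = τ' j l
      rw [grim_punish h1 h2 hbne j]
      have hdrop : (P ++ l).drop (m + 1) = l := by
        rw [← hPlen, List.drop_left]
      rw [hdrop]
      show (if hb : ∃ i', b i' ≠ a m i' then τ hb.choose (tr (π m) b) j l else b j) = τ' j l
      have hb : ∃ i', b i' ≠ a m i' := ⟨i, hbi⟩
      rw [dif_pos hb]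
      have hch : hb.choose = i := by
        by_contra hc
        exact hb.choose_spec (hbj _ hc)
      rw [hch]
    -- identification of the deviation play with a play against the punishment
    have key : ∀ t, histActs ρ (m + 1 + t) = P ++ histActs ρ2 t ∧
        actsAt ρ (m + 1 + t) = actsAt ρ2 t := by
      intro t
      induction t with
      | zero =>
        constructor
        · show histActs ρ (m + 1) = P ++ []
          rw [List.append_nil]
        · funext j
          show ρ j (histActs ρ (m + 1)) = ρ2 j (histActs ρ2 0)
          have h0 : histActs ρ2 0 = ([] : List (N → Ac)) := rfl
          have h1 : histActs ρ (m + 1) = P ++ ([] : List (N → Ac)) := by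
            rw [List.append_nil]
          rw [h0, h1]
          by_cases hj : j = i
          · subst hj
            rw [hρdef, hρ2def, Function.update_self, Function.update_self]
          · rw [hρdef, hρ2def, Function.update_of_ne hj, Function.update_of_ne hj]
            exact hgrimP [] j hj
      | succ t ih =>
        have hacts2 : actsAt ρ (m + 1 + t) = actsAt ρ2 t := ih.2
        have hh : histActs ρ (m + 1 + (t + 1)) = P ++ histActs ρ2 (t + 1) := by
          have : m + 1 + (t + 1) = (m + 1 + t) + 1 := by omega
          rw [this, histActs_succ, histActs_succ, ih.1, hacts2, List.append_assoc]
        refine ⟨hh, ?_⟩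
        funext j
        show ρ j (histActs ρ (m + 1 + (t + 1))) = ρ2 j (histActs ρ2 (t + 1))
        rw [hh]
        by_cases hj : j = i
        · subst hj
          rw [hρdef, hρ2def, Function.update_self, Function.update_self]
        · rw [hρdef, hρ2def, Function.update_of_ne hj, Function.update_of_ne hj]
          exact hgrimP _ j hj
    -- states of the deviation play equal the punishment play, shifted
    have hst2 : ∀ t, stateAt tr ρ s0 (m + 1 + t) = stateAt tr ρ2 s' t := by
      intro t
      induction t with
      | zero =>
        show stateAt tr ρ s0 (m + 1) = s'
        show tr (stateAt tr ρ s0 m) (actsAt ρ m) = s'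
        rw [hstρ m le_rfl]
      | succ t ih =>
        have : m + 1 + (t + 1) = (m + 1 + t) + 1 := by omega
        rw [this]
        show tr (stateAt tr ρ s0 (m + 1 + t)) (actsAt ρ (m + 1 + t)) = _
        rw [ih, (key t).2]
        rfl
    -- the payoff bound
    obtain ⟨B, hBbd⟩ : ∃ B : ℝ, ∀ s : St, |(w i s : ℝ)| ≤ B := by
      refine ⟨((Finset.univ.sup fun s => (w i s).natAbs : ℕ) : ℝ), fun s => ?_⟩
      have h1 : |(w i s : ℝ)| = (((w i s).natAbs : ℕ) : ℝ) := by
        rw [Nat.cast_natAbs, Int.cast_abs]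
      rw [h1]
      exact Nat.cast_le.mpr
        (Finset.le_sup (f := fun s => (w i s).natAbs) (Finset.mem_univ s))
    set r : ℕ → ℝ := fun n => (w i (stateAt tr ρ s0 n) : ℝ) with hrdef
    have hrB : ∀ n, |r n| ≤ B := fun n => hBbd _
    have hshift : MP (fun t => r (t + (m + 1))) = MP r := MP_shift hrB (m + 1)
    have hshift2 : (fun t => r (t + (m + 1)))
        = fun t => (w i (stateAt tr ρ2 s' t) : ℝ) := by
      funext t
      rw [hrdef]
      simp only
      rw [Nat.add_comm t (m + 1), hst2 t]
    have hpayρ : pay w tr ρ s0 i = pay w tr ρ2 s' i := by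
      unfold pay
      rw [← hshift, hshift2]
    calc pay w tr ρ s0 i = pay w tr ρ2 s' i := hpayρ
      _ ≤ pun i s' := hτspec i s' τi'
      _ ≤ z i := hpuns'
      _ ≤ MP (fun n => (w i (π n) : ℝ)) := hz i
      _ = pay w tr σ s0 i := (hpayσ i).symm
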